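/- Let t_n denote the number of independent dominating sets of the chain triangular cactus T_n. Then t_1 = 3, t_2 = 5, and for every n ≥ 3, t_n = t_{n-1} + t_{n-2}. -/

import Mathlib

/-- `S` is an independent dominating set of `G`: pairwise non-adjacent, and every
vertex outside `S` has a neighbour in `S`. -/
def IsIndepDomSet {V : Type*} (G : SimpleGraph V) (S : Finset V) : Prop :=
  (∀ v ∈ S, ∀ w ∈ S, ¬ G.Adj v w) ∧ ∀ v, v ∉ S → ∃ w ∈ S, G.Adj v w

/-- The chain triangular cactus `T n`: vertices `Sum.inl i` are `x i`
(`0 ≤ i ≤ n`) and `Sum.inr k` is `y (k+1)` (`0 ≤ k ≤ n-1`); the `i`-th triangle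
(`1 ≤ i ≤ n`) has vertices `x (i-1)`, `x i`, `y i`. -/
def triChain (n : ℕ) : SimpleGraph (Fin (n + 1) ⊕ Fin n) :=
  SimpleGraph.fromRel fun p q =>
    match p, q with
    | Sum.inl i, Sum.inl j => (i : ℕ) + 1 = (j : ℕ)
    | Sum.inl i, Sum.inr k => (i : ℕ) = (k : ℕ) ∨ (i : ℕ) = (k : ℕ) + 1
    | _, _ => False

/-- The number of independent dominating sets of the chain triangular cactus `T n`. -/
noncomputable def numIDSTri (n : ℕ) : ℕ :=
  Nat.card {S : Finset (Fin (n + 1) ⊕ Fin n) // IsIndepDomSet (triChain n) S}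

/-!
An independent dominating set `S` of `T n` meets every triangle in exactly one vertex: at most
one by independence, at least one because the apex `y i` must be dominated and its closed
neighbourhood is its triangle. Hence `S` is determined by its trace on the spine `x 0, …, x n`,
which may be any set of spine vertices without two consecutive ones (`y i` is then in `S` exactly
when `x (i-1)` and `x i` are not). Such subsets of a path on `m` vertices number `fib (m + 2)`:
split on whether the last vertex is taken.
-/

open Finset

def noConsecSubsets (m : ℕ) : Finset (Finset ℕ) :=
  (range m).powerset.filter fun s => ∀ i ∈ s, i + 1 ∉ s

lemma mem_noConsecSubsets {m : ℕ} {s : Finset ℕ} :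
    s ∈ noConsecSubsets m ↔ (∀ i ∈ s, i < m) ∧ ∀ i ∈ s, i + 1 ∉ s := by
  simp [noConsecSubsets, subset_iff]

lemma noConsecSubsets_add_two (m : ℕ) :
    noConsecSubsets (m + 2) =
      noConsecSubsets (m + 1) ∪ (noConsecSubsets m).image (insert (m + 1)) := by
  ext s
  simp only [mem_union, mem_image, mem_noConsecSubsets]
  constructor
  · rintro ⟨hs, hsp⟩
    by_cases hm : m + 1 ∈ s
    · refine Or.inr ⟨s.erase (m + 1), ⟨fun i hi => ?_, fun i hi => ?_⟩, insert_erase hm⟩ <;>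
        grind
    · exact Or.inl ⟨fun i hi => by grind, hsp⟩
  · rintro (⟨hs, hsp⟩ | ⟨t, ⟨ht, htsp⟩, rfl⟩)
    · exact ⟨fun i hi => by grind, hsp⟩
    · grind

lemma card_noConsecSubsets (m : ℕ) : #(noConsecSubsets m) = Nat.fib (m + 2) := by
  induction m using Nat.twoStepInduction with
  | zero => decide
  | one => decide
  | more m ih₀ ih₁ =>
    have hlast : ∀ t ∈ noConsecSubsets m, m + 1 ∉ t := fun t ht h =>
      absurd ((mem_noConsecSubsets.1 ht).1 _ h) (by omega)
    rw [noConsecSubsets_add_two, card_union_of_disjoint, card_image_of_injOn, ih₀, ih₁,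
      Nat.fib_add_two (n := m + 2), add_comm]
    · intro t ht u hu h
      rw [← erase_insert (hlast t ht), h, erase_insert (hlast u hu)]
    · refine disjoint_left.2 fun s hs hs' => ?_
      obtain ⟨t, -, rfl⟩ := mem_image.1 hs'
      exact absurd ((mem_noConsecSubsets.1 hs).1 _ (mem_insert_self _ _)) (by omega)

section TriChain

variable {n : ℕ}

@[simp]
lemma triChain_adj_inl_inl {i j : Fin (n + 1)} :
    (triChain n).Adj (.inl i) (.inl j) ↔ (i : ℕ) + 1 = j ∨ (j : ℕ) + 1 = i := by
  simp only [triChain, SimpleGraph.fromRel_adj, ne_eq, Sum.inl.injEq, Fin.ext_iff]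
  omega

@[simp]
lemma triChain_adj_inl_inr {i : Fin (n + 1)} {k : Fin n} :
    (triChain n).Adj (.inl i) (.inr k) ↔ (i : ℕ) = k ∨ (i : ℕ) = k + 1 := by
  simp [triChain]

@[simp]
lemma triChain_adj_inr_inl {i : Fin (n + 1)} {k : Fin n} :
    (triChain n).Adj (.inr k) (.inl i) ↔ (i : ℕ) = k ∨ (i : ℕ) = k + 1 := by
  rw [SimpleGraph.adj_comm, triChain_adj_inl_inr]

@[simp]
lemma triChain_not_adj_inr_inr {k l : Fin n} : ¬ (triChain n).Adj (.inr k) (.inr l) := by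
  simp [triChain]

end TriChain

section Spine

variable {n : ℕ}

def spineIndices (S : Finset (Fin (n + 1) ⊕ Fin n)) : Finset ℕ :=
  S.toLeft.map Fin.valEmbedding

/-- The vertex `y (k+1)` is taken exactly when neither of its neighbours on the spine is. -/
def ofSpineIndices (n : ℕ) (T : Finset ℕ) : Finset (Fin (n + 1) ⊕ Fin n) :=
  (univ.filter fun i : Fin (n + 1) => (i : ℕ) ∈ T).disjSum
    (univ.filter fun k : Fin n => (k : ℕ) ∉ T ∧ (k : ℕ) + 1 ∉ T)

lemma mem_spineIndices {S : Finset (Fin (n + 1) ⊕ Fin n)} {a : ℕ} :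
    a ∈ spineIndices S ↔ ∃ i : Fin (n + 1), .inl i ∈ S ∧ (i : ℕ) = a := by
  simp [spineIndices]

@[simp]
lemma val_mem_spineIndices {S : Finset (Fin (n + 1) ⊕ Fin n)} {i : Fin (n + 1)} :
    (i : ℕ) ∈ spineIndices S ↔ .inl i ∈ S := by
  simp [mem_spineIndices, Fin.val_inj]

@[simp]
lemma inl_mem_ofSpineIndices {T : Finset ℕ} {i : Fin (n + 1)} :
    .inl i ∈ ofSpineIndices n T ↔ (i : ℕ) ∈ T := by
  simp [ofSpineIndices]

@[simp]
lemma inr_mem_ofSpineIndices {T : Finset ℕ} {k : Fin n} :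
    .inr k ∈ ofSpineIndices n T ↔ (k : ℕ) ∉ T ∧ (k : ℕ) + 1 ∉ T := by
  simp [ofSpineIndices]

lemma spineIndices_ofSpineIndices {T : Finset ℕ} (hT : ∀ i ∈ T, i < n + 1) :
    spineIndices (ofSpineIndices n T) = T := by
  ext a
  simp only [mem_spineIndices, inl_mem_ofSpineIndices]
  exact ⟨by rintro ⟨i, hi, rfl⟩; exact hi, fun ha => ⟨⟨a, hT a ha⟩, ha, rfl⟩⟩

namespace IsIndepDomSet

variable {S : Finset (Fin (n + 1) ⊕ Fin n)} (hS : IsIndepDomSet (triChain n) S)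
include hS

lemma spineIndices_mem_noConsecSubsets : spineIndices S ∈ noConsecSubsets (n + 1) := by
  rw [mem_noConsecSubsets]
  constructor
  · intro a ha
    obtain ⟨i, -, rfl⟩ := mem_spineIndices.1 ha
    exact i.isLt
  · intro a ha ha'
    obtain ⟨i, hi, rfl⟩ := mem_spineIndices.1 ha
    obtain ⟨j, hj, hij⟩ := mem_spineIndices.1 ha'
    exact hS.1 _ hi _ hj (by simp [hij])

lemma ofSpineIndices_spineIndices : ofSpineIndices n (spineIndices S) = S := by
  ext (i | k)
  · simp
  simp only [inr_mem_ofSpineIndices]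
  constructor
  · rintro ⟨hk, hk'⟩
    by_contra hkS
    obtain ⟨i | l, hw, hadj⟩ := hS.2 _ hkS
    · rcases triChain_adj_inr_inl.1 hadj with h | h
      · exact hk (mem_spineIndices.2 ⟨i, hw, h⟩)
      · exact hk' (mem_spineIndices.2 ⟨i, hw, h⟩)
    · exact triChain_not_adj_inr_inr hadj
  · intro hkS
    constructor <;> intro h <;> obtain ⟨i, hi, hik⟩ := mem_spineIndices.1 h <;>
      exact hS.1 _ hkS _ hi (by simp [hik])

end IsIndepDomSet

lemma not_adj_of_mem_ofSpineIndices {T : Finset ℕ} (hT : ∀ i ∈ T, i + 1 ∉ T) :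
    ∀ v ∈ ofSpineIndices n T, ∀ w ∈ ofSpineIndices n T, ¬ (triChain n).Adj v w := by
  rintro (i | k) hv (j | l) hw hadj <;> simp only [inl_mem_ofSpineIndices,
    inr_mem_ofSpineIndices, triChain_adj_inl_inl, triChain_adj_inl_inr,
    triChain_adj_inr_inl] at hv hw hadj
  · rcases hadj with h | h
    · exact hT _ hv (h ▸ hw)
    · exact hT _ hw (h ▸ hv)
  · rcases hadj with h | h <;> rw [h] at hv
    exacts [hw.1 hv, hw.2 hv]
  · rcases hadj with h | h <;> rw [h] at hw
    exacts [hv.1 hw, hv.2 hw]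
  · exact triChain_not_adj_inr_inr hadj

lemma exists_adj_of_notMem_ofSpineIndices (hn : 0 < n) (T : Finset ℕ) :
    ∀ v ∉ ofSpineIndices n T, ∃ w ∈ ofSpineIndices n T, (triChain n).Adj v w := by
  rintro (i | k) hv <;> simp only [inl_mem_ofSpineIndices, inr_mem_ofSpineIndices] at hv
  · obtain ⟨k, hk⟩ : ∃ k : Fin n, (i : ℕ) = k ∨ (i : ℕ) = k + 1 :=
      ⟨⟨min i (n - 1), by omega⟩, by simp only; omega⟩
    by_cases hy : (k : ℕ) ∉ T ∧ (k : ℕ) + 1 ∉ T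
    · exact ⟨.inr k, by simpa using hy, by simpa using hk⟩
    by_cases h0 : (k : ℕ) ∈ T
    · have : (i : ℕ) ≠ k := fun h => hv (h ▸ h0)
      exact ⟨.inl k.castSucc, by simpa using h0, by simp; omega⟩
    · have h1 : (k : ℕ) + 1 ∈ T := by tauto
      have : (i : ℕ) ≠ k + 1 := fun h => hv (h ▸ h1)
      exact ⟨.inl k.succ, by simpa using h1, by simp; omega⟩
  · by_cases h0 : (k : ℕ) ∈ T
    · exact ⟨.inl k.castSucc, by simpa using h0, by simp⟩
    · have h1 : (k : ℕ) + 1 ∈ T := by tauto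
      exact ⟨.inl k.succ, by simpa using h1, by simp⟩

lemma isIndepDomSet_ofSpineIndices (hn : 0 < n) {T : Finset ℕ} (hT : ∀ i ∈ T, i + 1 ∉ T) :
    IsIndepDomSet (triChain n) (ofSpineIndices n T) :=
  ⟨not_adj_of_mem_ofSpineIndices hT, exists_adj_of_notMem_ofSpineIndices hn T⟩

end Spine

lemma numIDSTri_eq_card_noConsecSubsets {n : ℕ} (hn : 0 < n) :
    numIDSTri n = #(noConsecSubsets (n + 1)) := by
  classical
  rw [numIDSTri, Nat.card_eq_fintype_card, Fintype.card_subtype]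
  refine card_nbij' spineIndices (ofSpineIndices n) (fun S hS => ?_) (fun T hT => ?_)
    (fun S hS => ?_) (fun T hT => ?_)
  · exact (mem_filter.1 hS).2.spineIndices_mem_noConsecSubsets
  · exact mem_filter.2 ⟨mem_univ _, isIndepDomSet_ofSpineIndices hn (mem_noConsecSubsets.1 hT).2⟩
  · exact (mem_filter.1 hS).2.ofSpineIndices_spineIndices
  · exact spineIndices_ofSpineIndices (mem_noConsecSubsets.1 hT).1

lemma numIDSTri_eq_fib {n : ℕ} (hn : 0 < n) : numIDSTri n = Nat.fib (n + 3) := by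
  rw [numIDSTri_eq_card_noConsecSubsets hn, card_noConsecSubsets]

theorem numIDSTri_recurrence :
    numIDSTri 1 = 3 ∧ numIDSTri 2 = 5 ∧
      ∀ n : ℕ, 3 ≤ n → numIDSTri n = numIDSTri (n - 1) + numIDSTri (n - 2) := by
  refine ⟨by rw [numIDSTri_eq_fib one_pos]; rfl, by rw [numIDSTri_eq_fib two_pos]; rfl, ?_⟩
  intro n hn
  obtain ⟨m, rfl⟩ : ∃ m, n = m + 3 := ⟨n - 3, by omega⟩
  simp only [show m + 3 - 1 = m + 2 by omega, show m + 3 - 2 = m + 1 by omega,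
    numIDSTri_eq_fib (Nat.succ_pos _)]
  rw [Nat.fib_add_two, add_comm]
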